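/- A set of D unit vectors {|ψ_j⟩}_{j=1}^D in a D-dimensional Hilbert space forms an orthonormal basis if and only if their generalized Bloch vectors {b_j} satisfy Σ_{j=1}^D b_j = 0 and b_j·b_k = (D δ_{jk} − 1)/(D−1) for all j,k. -/

import Mathlib

/-!
Write `ρ_j = |ψ_j⟩⟨ψ_j| = I/D + c S(b_j)` with `c = √((D-1)/D)` and `S(u) = Σ_i u_i γ_i/√2`.
Since `S` is traceless and `Tr(S(u) S(v)) = ⟨u, v⟩`, the overlaps of the states are
`|⟨ψ_j, ψ_k⟩|² = Tr(ρ_j ρ_k) = 1/D + (D-1)/D ⟨b_j, b_k⟩`, so orthogonality of the unit vectors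
is equivalent to the simplex inner products of the Bloch vectors. An orthonormal basis
moreover resolves the identity, `Σ ρ_j = I`, which gives `c S(Σ b_j) = 0`, and `S` is
injective because `Tr(S(u)²) = ‖u‖²`.
-/

open scoped InnerProductSpace ComplexConjugate Matrix

noncomputable section

namespace Bloch

variable {ι κ : Type*} [Fintype κ]

def ketBra (v : EuclideanSpace ℂ ι) : Matrix ι ι ℂ :=
  Matrix.of fun i i' => v i * conj (v i')

lemma trace_ketBra_mul_ketBra [Fintype ι] (v w : EuclideanSpace ℂ ι) :
    (ketBra v * ketBra w).trace = ((‖⟪v, w⟫_ℂ‖ ^ 2 : ℝ) : ℂ) := by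
  have h : (ketBra v * ketBra w).trace = ⟪v, w⟫_ℂ * ⟪w, v⟫_ℂ := by
    simp only [ketBra, Matrix.trace, Matrix.diag, Matrix.mul_apply, Matrix.of_apply,
      PiLp.inner_apply, RCLike.inner_apply]
    rw [Finset.sum_mul_sum, Finset.sum_comm]
    refine Finset.sum_congr rfl fun m _ => Finset.sum_congr rfl fun n _ => ?_
    ring
  rw [h, ← inner_conj_symm w v, RCLike.mul_conj]
  push_cast
  rfl

lemma sum_ketBra_eq_one [Fintype ι] [DecidableEq ι] {ψ : ι → EuclideanSpace ℂ ι}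
    (h : Orthonormal ℂ ψ) :
    ∑ j, ketBra (ψ j) = 1 := by
  let U : Matrix ι ι ℂ := Matrix.of fun i j => ψ j i
  have hU : Uᴴ * U = 1 := by
    ext j k
    rw [Matrix.one_apply, ← orthonormal_iff_ite.mp h j k]
    simp [U, Matrix.mul_apply, PiLp.inner_apply, mul_comm]
  ext i i'
  rw [← mul_eq_one_comm.mp hU]
  simp [U, ketBra, Matrix.sum_apply, Matrix.mul_apply]

variable (γ : κ → Matrix ι ι ℂ)

def blochMatrix (u : EuclideanSpace ℝ κ) : Matrix ι ι ℂ :=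
  ∑ i, ((u i : ℝ) : ℂ) • (((Real.sqrt 2 : ℝ) : ℂ))⁻¹ • γ i

lemma blochMatrix_sum {J : Type*} [Fintype J] (b : J → EuclideanSpace ℝ κ) :
    blochMatrix γ (∑ j, b j) = ∑ j, blochMatrix γ (b j) := by
  simp only [blochMatrix, WithLp.ofLp_sum, Finset.sum_apply, Complex.ofReal_sum, Finset.sum_smul]
  exact Finset.sum_comm

variable {γ} [Fintype ι]

lemma trace_blochMatrix (htrace : ∀ i, (γ i).trace = 0) (u : EuclideanSpace ℝ κ) :
    (blochMatrix γ u).trace = 0 := by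
  simp [blochMatrix, Matrix.trace_sum, Matrix.trace_smul, htrace]

lemma trace_blochMatrix_mul_blochMatrix [DecidableEq κ]
    (horth : ∀ i j, (γ i * γ j).trace = if i = j then 2 else 0) (u v : EuclideanSpace ℝ κ) :
    (blochMatrix γ u * blochMatrix γ v).trace = ((⟪u, v⟫_ℝ : ℝ) : ℂ) := by
  have hsqrt : (((Real.sqrt 2 : ℝ) : ℂ))⁻¹ * (((Real.sqrt 2 : ℝ) : ℂ))⁻¹ * 2 = 1 := by
    rw [← mul_inv, ← Complex.ofReal_mul, Real.mul_self_sqrt zero_le_two]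
    norm_num
  simp only [blochMatrix, Matrix.sum_mul, Matrix.mul_sum, Matrix.trace_sum, Matrix.smul_mul,
    Matrix.mul_smul, Matrix.trace_smul, horth, smul_eq_mul, mul_ite, mul_zero,
    Finset.sum_ite_eq', Finset.mem_univ, if_true, PiLp.inner_apply, RCLike.inner_apply,
    conj_trivial, Complex.ofReal_sum, Complex.ofReal_mul]
  refine Finset.sum_congr rfl fun i _ => ?_
  linear_combination ((u i : ℂ) * v i) * hsqrt

lemma eq_zero_of_blochMatrix_eq_zero [DecidableEq κ]
    (horth : ∀ i j, (γ i * γ j).trace = if i = j then 2 else 0) {u : EuclideanSpace ℝ κ}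
    (h : blochMatrix γ u = 0) : u = 0 := by
  have hu := trace_blochMatrix_mul_blochMatrix horth u u
  rw [h, zero_mul, Matrix.trace_zero, eq_comm, Complex.ofReal_eq_zero] at hu
  exact inner_self_eq_zero.mp hu

def blochState (D : ℕ) (γ : κ → Matrix (Fin D) (Fin D) ℂ) (u : EuclideanSpace ℝ κ) :
    Matrix (Fin D) (Fin D) ℂ :=
  ((D : ℂ))⁻¹ • 1 + ((Real.sqrt (((D : ℝ) - 1) / D) : ℝ) : ℂ) • blochMatrix γ u

variable {D : ℕ} {γ : κ → Matrix (Fin D) (Fin D) ℂ}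

lemma trace_blochState_mul_blochState [DecidableEq κ] (htrace : ∀ i, (γ i).trace = 0)
    (horth : ∀ i j, (γ i * γ j).trace = if i = j then 2 else 0) (u v : EuclideanSpace ℝ κ) :
    (blochState D γ u * blochState D γ v).trace =
      (((D : ℝ)⁻¹ + ((D : ℝ) - 1) / D * ⟪u, v⟫_ℝ : ℝ) : ℂ) := by
  have hc : 0 ≤ ((D : ℝ) - 1) / D := by
    rcases Nat.eq_zero_or_pos D with rfl | hD
    · simp
    · exact div_nonneg (sub_nonneg.mpr (Nat.one_le_cast.mpr hD)) (Nat.cast_nonneg D)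
  have hDinv : ((D : ℂ))⁻¹ * ((D : ℂ))⁻¹ * D = ((D : ℂ))⁻¹ := by
    rcases eq_or_ne (D : ℂ) 0 with h | h
    · simp [h]
    · field_simp
  simp only [blochState, add_mul, mul_add, Matrix.trace_add, Matrix.smul_mul, Matrix.mul_smul,
    Matrix.one_mul, Matrix.mul_one, Matrix.trace_smul, Matrix.trace_one, Fintype.card_fin,
    trace_blochMatrix htrace, trace_blochMatrix_mul_blochMatrix horth, smul_eq_mul, mul_zero,
    add_zero, zero_add, smul_smul]
  rw [← Complex.ofReal_mul, Real.mul_self_sqrt hc, hDinv]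
  push_cast
  ring

lemma sum_blochState (hD : D ≠ 0) (b : Fin D → EuclideanSpace ℝ κ) :
    ∑ j, blochState D γ (b j) =
      1 + ((Real.sqrt (((D : ℝ) - 1) / D) : ℝ) : ℂ) • blochMatrix γ (∑ j, b j) := by
  rw [blochMatrix_sum, Finset.smul_sum]
  simp only [blochState, Finset.sum_add_distrib, Finset.sum_const, Finset.card_univ,
    Fintype.card_fin, ← Nat.cast_smul_eq_nsmul ℂ, smul_smul,
    mul_inv_cancel₀ (Nat.cast_ne_zero.mpr hD : (D : ℂ) ≠ 0), one_smul]

lemma sum_eq_zero_of_sum_blochState_eq_one [DecidableEq κ] (hD : 2 ≤ D)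
    (horth : ∀ i j, (γ i * γ j).trace = if i = j then 2 else 0)
    {b : Fin D → EuclideanSpace ℝ κ} (h : ∑ j, blochState D γ (b j) = 1) : ∑ j, b j = 0 := by
  have hD' : (2 : ℝ) ≤ D := by exact_mod_cast hD
  have hc : ((Real.sqrt (((D : ℝ) - 1) / D) : ℝ) : ℂ) ≠ 0 := by
    rw [Complex.ofReal_ne_zero, Real.sqrt_ne_zero']
    exact div_pos (by linarith) (by linarith)
  rw [sum_blochState (by omega), add_eq_left, smul_eq_zero] at h
  exact eq_zero_of_blochMatrix_eq_zero horth (h.resolve_left hc)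

lemma inv_add_mul_eq_iff_eq_div (hD : 2 ≤ D) (x t : ℝ) :
    (D : ℝ)⁻¹ + ((D : ℝ) - 1) / D * x = t ↔ x = ((D : ℝ) * t - 1) / ((D : ℝ) - 1) := by
  have hD' : (2 : ℝ) ≤ D := by exact_mod_cast hD
  have hD0 : (D : ℝ) ≠ 0 := by linarith
  have hD1 : (D : ℝ) - 1 ≠ 0 := by linarith
  rw [eq_div_iff hD1]
  field_simp
  constructor <;> intro h <;> linarith

end Bloch

end

open Bloch

theorem stmt_2_general (D : ℕ) (hD : 2 ≤ D)
    (γ : Fin (D ^ 2 - 1) → Matrix (Fin D) (Fin D) ℂ)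
    (htrace : ∀ i, (γ i).trace = 0)
    (horth : ∀ i j, (γ i * γ j).trace = if i = j then 2 else 0)
    (ψ : Fin D → EuclideanSpace ℂ (Fin D))
    (hψ : ∀ j, ‖ψ j‖ = 1)
    (b : Fin D → EuclideanSpace ℝ (Fin (D ^ 2 - 1)))
    (hb : ∀ j, Matrix.of (fun i i' => ψ j i * (starRingEnd ℂ) (ψ j i')) =
      ((D : ℂ))⁻¹ • (1 : Matrix (Fin D) (Fin D) ℂ) +
        ((Real.sqrt (((D : ℝ) - 1) / D) : ℝ) : ℂ) •
          ∑ i, ((b j i : ℝ) : ℂ) • (((Real.sqrt 2 : ℝ) : ℂ))⁻¹ • γ i) :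
    Orthonormal ℂ ψ ↔
      (∑ j, b j = 0 ∧
        ∀ j k, ⟪b j, b k⟫_ℝ =
          ((D : ℝ) * (if j = k then 1 else 0) - 1) / ((D : ℝ) - 1)) := by
  have hρ : ∀ j, ketBra (ψ j) = blochState D γ (b j) := hb
  have overlap : ∀ j k,
      ‖⟪ψ j, ψ k⟫_ℂ‖ ^ 2 = (D : ℝ)⁻¹ + ((D : ℝ) - 1) / D * ⟪b j, b k⟫_ℝ := fun j k => by
    have h := trace_ketBra_mul_ketBra (ψ j) (ψ k)
    rwa [hρ, hρ, trace_blochState_mul_blochState htrace horth, Complex.ofReal_inj, eq_comm] at h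
  simp_rw [← inv_add_mul_eq_iff_eq_div hD, ← overlap]
  constructor
  · intro h
    refine ⟨sum_eq_zero_of_sum_blochState_eq_one hD horth ?_, fun j k => ?_⟩
    · simpa only [hρ] using sum_ketBra_eq_one h
    · split_ifs with hjk
      · simp [hjk, hψ]
      · simp [h.2 hjk]
  · rintro ⟨-, h⟩
    refine ⟨hψ, fun j k hjk => ?_⟩
    simpa [hjk] using h j k

/-- D unit vectors form an orthonormal basis iff their Bloch vectors sum to zero
and have the pairwise inner products of a regular simplex. -/
theorem stmt_2 (D : ℕ) (hD : 2 ≤ D)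
    (γ : Fin (D ^ 2 - 1) → Matrix (Fin D) (Fin D) ℂ)
    (hherm : ∀ i, (γ i).IsHermitian)
    (htrace : ∀ i, (γ i).trace = 0)
    (horth : ∀ i j, (γ i * γ j).trace = if i = j then 2 else 0)
    (ψ : Fin D → EuclideanSpace ℂ (Fin D))
    (hψ : ∀ j, ‖ψ j‖ = 1)
    (b : Fin D → EuclideanSpace ℝ (Fin (D ^ 2 - 1)))
    (hb : ∀ j, Matrix.of (fun i i' => ψ j i * (starRingEnd ℂ) (ψ j i')) =
      ((D : ℂ))⁻¹ • (1 : Matrix (Fin D) (Fin D) ℂ) +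
        ((Real.sqrt (((D : ℝ) - 1) / D) : ℝ) : ℂ) •
          ∑ i, ((b j i : ℝ) : ℂ) • (((Real.sqrt 2 : ℝ) : ℂ))⁻¹ • γ i) :
    Orthonormal ℂ ψ ↔
      (∑ j, b j = 0 ∧
        ∀ j k, ⟪b j, b k⟫_ℝ =
          ((D : ℝ) * (if j = k then 1 else 0) - 1) / ((D : ℝ) - 1)) :=
  stmt_2_general D hD γ htrace horth ψ hψ b hb
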